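/- arXiv:2212.14348 — 4 statements merged into one kernel-verified Lean document; each statement's English description precedes it below -/
import Mathlib

section
/- Let λ, c₁, c₂ ∈ ℂ with λ ≠ i and λ ≠ −i, and let ρ ∈ ℂ satisfy ρ² = 1 + λ² (so ρ ≠ 0). Define θ(x,t) = ρ(x + λt) and the vector function φ₁(x,t) = (e^{it/2}[(sin θ(x,t)/ρ)(−iλc₁ + c₂) + cos θ(x,t)·c₁], e^{−it/2}[(sin θ(x,t)/ρ)(iλc₂ − c₁) + cos θ(x,t)·c₂]). Then for all (x,t) ∈ ℝ², φ₁ satisfies both equations of the Lax pair with seed potential q(x,t) = e^{it}: ∂ₓφ₁ = [[−iλ, e^{it}], [−e^{−it}, iλ]]·φ₁ and ∂ₜφ₁ = [[−iλ² + i/2, λe^{it}], [−λe^{−it}, iλ² − i/2]]·φ₁. -/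
noncomputable section
open Complex

lemma had_inner (ρ A B : ℂ) {f : ℂ → ℂ} {f' : ℂ} {z : ℂ} (hf : HasDerivAt f f' z) :
    HasDerivAt (fun w => Complex.sin (f w) / ρ * A + Complex.cos (f w) * B)
      ((Complex.cos (f z) * f' / ρ) * A + (-(Complex.sin (f z) * f')) * B) z := by
  have hs := (((Complex.hasDerivAt_sin (f z)).comp z hf).div_const ρ).mul_const A
  have hc := ((Complex.hasDerivAt_cos (f z)).comp z hf).mul_const B
  exact (hs.add hc).congr_deriv (by ring)

lemma had_exp (c : ℂ) (z : ℂ) :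
    HasDerivAt (fun w : ℂ => Complex.exp (c * w / 2)) (c / 2 * Complex.exp (c * z / 2)) z := by
  have h : HasDerivAt (fun w : ℂ => c * w / 2) (c / 2) z := by
    simpa [mul_comm] using ((hasDerivAt_id z).const_mul c).div_const 2
  simpa [mul_comm, Function.comp_def] using (Complex.hasDerivAt_exp (c * z / 2)).comp z h

/-- The seed Lax solution φ₁ = (φ1, φ2) with plane-wave seed q = e^{it} satisfies both
equations of the Lax pair:
∂ₓφ₁ = [[−iλ, e^{it}], [−e^{−it}, iλ]]·φ₁ and
∂ₜφ₁ = [[−iλ² + i/2, λe^{it}], [−λe^{−it}, iλ² − i/2]]·φ₁. -/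
theorem seed_lax_solution (lam c₁ c₂ ρ : ℂ)
    (h1 : lam ≠ Complex.I) (h2 : lam ≠ -Complex.I)
    (hρ : ρ ^ 2 = 1 + lam ^ 2) :
    let θ : ℝ → ℝ → ℂ := fun x t => ρ * ((x : ℂ) + lam * (t : ℂ))
    let φ1 : ℝ → ℝ → ℂ := fun x t =>
      Complex.exp (Complex.I * (t : ℂ) / 2) *
        ((Complex.sin (θ x t) / ρ) * (-Complex.I * lam * c₁ + c₂) +
          Complex.cos (θ x t) * c₁)
    let φ2 : ℝ → ℝ → ℂ := fun x t =>
      Complex.exp (-Complex.I * (t : ℂ) / 2) *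
        ((Complex.sin (θ x t) / ρ) * (Complex.I * lam * c₂ - c₁) +
          Complex.cos (θ x t) * c₂)
    ∀ x t : ℝ,
      deriv (fun x' => φ1 x' t) x =
        (-Complex.I * lam) * φ1 x t + Complex.exp (Complex.I * (t : ℂ)) * φ2 x t ∧
      deriv (fun x' => φ2 x' t) x =
        (-Complex.exp (-Complex.I * (t : ℂ))) * φ1 x t + (Complex.I * lam) * φ2 x t ∧
      deriv (fun t' => φ1 x t') t =
        (-Complex.I * lam ^ 2 + Complex.I / 2) * φ1 x t +
          (lam * Complex.exp (Complex.I * (t : ℂ))) * φ2 x t ∧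
      deriv (fun t' => φ2 x t') t =
        (-(lam * Complex.exp (-Complex.I * (t : ℂ)))) * φ1 x t +
          (Complex.I * lam ^ 2 - Complex.I / 2) * φ2 x t := by
  intro θ φ1 φ2 x t
  have hρ0 : ρ ≠ 0 := by
    intro h
    have hfac : (lam - Complex.I) * (lam + Complex.I) ≠ 0 :=
      mul_ne_zero (sub_ne_zero.2 h1) (fun hh => h2 (by linear_combination hh))
    apply hfac
    have : (0:ℂ) = 1 + lam ^ 2 := by rw [← hρ, h]; ring
    linear_combination -this - Complex.I_sq
  have hE0 : Complex.exp (Complex.I * (t:ℂ) / 2) ≠ 0 := Complex.exp_ne_zero _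
  have hEn : Complex.exp (-Complex.I * (t:ℂ) / 2) = (Complex.exp (Complex.I * (t:ℂ) / 2))⁻¹ := by
    rw [← Complex.exp_neg]; ring_nf
  have hEt : Complex.exp (Complex.I * (t:ℂ)) = Complex.exp (Complex.I * (t:ℂ) / 2) ^ 2 := by
    rw [← Complex.exp_nat_mul]; ring_nf
  have hEnt : Complex.exp (-Complex.I * (t:ℂ)) = (Complex.exp (Complex.I * (t:ℂ) / 2) ^ 2)⁻¹ := by
    rw [← Complex.exp_nat_mul, ← Complex.exp_neg]; ring_nf
  have hin_x : HasDerivAt (fun w : ℂ => ρ * (w + lam * (t:ℂ))) ρ (x:ℂ) := by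
    simpa using ((hasDerivAt_id (x:ℂ)).add_const (lam * (t:ℂ))).const_mul ρ
  have hin_t : HasDerivAt (fun w : ℂ => ρ * ((x:ℂ) + lam * w)) (ρ * lam) (t:ℂ) := by
    simpa [mul_comm] using (((hasDerivAt_id (t:ℂ)).const_mul lam).const_add (x:ℂ)).const_mul ρ
  set E := Complex.exp (Complex.I * (t:ℂ) / 2) with hEdef
  set s := Complex.sin (ρ * ((x:ℂ) + lam * (t:ℂ))) with hsdef
  set co := Complex.cos (ρ * ((x:ℂ) + lam * (t:ℂ))) with hcdef
  refine ⟨?_, ?_, ?_, ?_⟩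
  · have H : HasDerivAt (fun x' : ℝ => φ1 x' t)
        (E * ((co * ρ / ρ) * (-Complex.I * lam * c₁ + c₂) + (-(s * ρ)) * c₁)) x :=
      (((had_inner ρ (-Complex.I * lam * c₁ + c₂) c₁ hin_x).const_mul E).comp_ofReal)
    rw [H.deriv]
    simp only [φ1, φ2, θ, hEn, hEt]
    field_simp
    linear_combination (-(E^2 * ρ * c₁ * s)) * hρ + (-(E^2 * ρ * c₁ * lam^2 * s)) * Complex.I_sq
      + ((E^2 * ρ - E) * c₁ * s) * hρ + ((E^2 * ρ - E) * c₁ * s * lam^2) * Complex.I_sq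
  · have H : HasDerivAt (fun x' : ℝ => φ2 x' t)
        (Complex.exp (-Complex.I * (t:ℂ) / 2) *
          ((co * ρ / ρ) * (Complex.I * lam * c₂ - c₁) + (-(s * ρ)) * c₂)) x :=
      (((had_inner ρ (Complex.I * lam * c₂ - c₁) c₂ hin_x).const_mul
        (Complex.exp (-Complex.I * (t:ℂ) / 2))).comp_ofReal)
    rw [H.deriv]
    simp only [φ1, φ2, θ, hEn, hEnt]
    field_simp
    linear_combination (-(E * ρ * c₂ * s) + (E - E^3) * c₂ * s * ρ) * hρ +
      (-(E * ρ * c₂ * lam^2 * s) + (E - E^3) * c₂ * s * ρ * lam^2) * Complex.I_sq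
      + ((E^3 * ρ - E) * c₂ * s) * hρ + ((E^3 * ρ - E) * c₂ * s * lam^2) * Complex.I_sq
  · have H : HasDerivAt (fun t' : ℝ => φ1 x t')
        (Complex.I / 2 * E * ((s / ρ) * (-Complex.I * lam * c₁ + c₂) + co * c₁) +
          E * ((co * (ρ * lam) / ρ) * (-Complex.I * lam * c₁ + c₂) + (-(s * (ρ * lam))) * c₁)) t := by
      exact ((had_exp Complex.I (t:ℂ)).mul
        (had_inner ρ (-Complex.I * lam * c₁ + c₂) c₁ hin_t)).comp_ofReal
    rw [H.deriv]
    simp only [φ1, φ2, θ, hEn, hEt]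
    field_simp
    linear_combination (-(E^2 * ρ * c₁ * lam * s) + E^2 * s * lam * c₁ * (ρ - 4 * ρ^3)) * hρ +
      (-(E^2 * ρ * c₁ * lam^3 * s) + E^2 * ρ^2 * lam * co * c₁ - E^2 * ρ * lam^2 * s * c₂ / 2
        + E^2 * ρ * lam^2 * s * c₂
        - E^2 * s * lam^2 * c₂ * ρ / 2 - E^2 * lam * c₁ * co * ρ^2
        + E^2 * s * lam^3 * c₁ * (ρ - 4 * ρ^3)) * Complex.I_sq
      + (4 * E^2 * s * lam * c₁ * ρ^3 - 2 * E * s * lam * c₁) * hρ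
      + ((4 * E^2 * s * lam * c₁ * ρ^3 - 2 * E * s * lam * c₁) * lam^2) * Complex.I_sq
  · have H : HasDerivAt (fun t' : ℝ => φ2 x t')
        ((-Complex.I) / 2 * Complex.exp (-Complex.I * (t:ℂ) / 2) *
            ((s / ρ) * (Complex.I * lam * c₂ - c₁) + co * c₂) +
          Complex.exp (-Complex.I * (t:ℂ) / 2) *
            ((co * (ρ * lam) / ρ) * (Complex.I * lam * c₂ - c₁) + (-(s * (ρ * lam))) * c₂)) t := by
      exact ((had_exp (-Complex.I) (t:ℂ)).mul
        (had_inner ρ (Complex.I * lam * c₂ - c₁) c₂ hin_t)).comp_ofReal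
    rw [H.deriv]
    simp only [φ1, φ2, θ, hEn, hEnt]
    field_simp
    linear_combination (-(E * ρ * c₂ * lam * s) + s * lam * c₂ * E * (ρ - 4 * ρ^3 * E^3)) * hρ +
      (-(E * ρ * c₂ * lam^3 * s) + E * ρ^2 * lam * co * c₂
        - lam * c₂ * co * ρ^2 * E + s * lam^3 * c₂ * ρ * E
        - 4 * s * lam^3 * c₂ * ρ^3 * E^4) * Complex.I_sq
      + (4 * E^4 * s * lam * c₂ * ρ^3 - 2 * E * s * lam * c₂) * hρ
      + ((4 * E^4 * s * lam * c₂ * ρ^3 - 2 * E * s * lam * c₂) * lam^2) * Complex.I_sq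
end
end

section
/- Let λ₁ ∈ ℂ with Im(λ₁) ≠ 0 and λ₁² ≠ −1, let n be a positive integer, r ∈ {1,−1}, and let s₁, s₂, χ, τ ∈ ℝ. Suppose A, B, C, D ∈ ℂ satisfy the four relations: (i) A − B + (r/(2n))C − (r/(2n))D = 0; (ii) iλ₁A − iλ₁*B − (r/(2n))C − (r/(2n))D − 4τ = 0; (iii) iλ₁²A − i(λ₁*)²B − (ir/(2n))C + (ir/(2n))D − 2χ − 2τs₁ = 0; (iv) iλ₁³A − i(λ₁*)³B + (r/(2n))C + (r/(2n))D + (1/2)(4s₂ − 3s₁²)τ − s₁χ = 0. Then C = −nr·[(8|λ₁|² − 8Re(λ₁)s₁ + 3s₁² − 4s₂ − 16Re(λ₁)i + 4is₁)τ + (2s₁ − 8Re(λ₁) + 4i)χ] / (2(i−λ₁)(i−λ₁*)), and A = [(4s₂ − 3s₁² + 4s₁λ₁* − 8)τ + (4λ₁* − 2s₁)χ] / (4(1+λ₁²)Im(λ₁)). -/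
/-!
Set `k = r / (2n)`. The four relations say that the weights `iA, -iB, ikC, -ikD` placed at the
nodes `λ₁, conj λ₁, i, -i` have prescribed moments of orders `0, …, 3`. Summing the weights
against a cubic that vanishes at three of the nodes isolates the weight at the fourth node, and
the right-hand side is determined by the moments; with the cubics vanishing at
`{conj λ₁, i, -i}` and `{λ₁, conj λ₁, -i}` this gives `A` and `C`.
-/

open Complex ComplexConjugate

theorem sum_mul_cubic_eq_of_moments {R : Type*} [CommRing R]
    {p₁ p₂ p₃ p₄ w₁ w₂ w₃ w₄ c₀ c₁ c₂ c₃ : R}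
    (h₀ : w₁ + w₂ + w₃ + w₄ = c₀)
    (h₁ : w₁ * p₁ + w₂ * p₂ + w₃ * p₃ + w₄ * p₄ = c₁)
    (h₂ : w₁ * p₁ ^ 2 + w₂ * p₂ ^ 2 + w₃ * p₃ ^ 2 + w₄ * p₄ ^ 2 = c₂)
    (h₃ : w₁ * p₁ ^ 3 + w₂ * p₂ ^ 3 + w₃ * p₃ ^ 3 + w₄ * p₄ ^ 3 = c₃) (a b c : R) :
    w₁ * ((p₁ - a) * (p₁ - b) * (p₁ - c)) + w₂ * ((p₂ - a) * (p₂ - b) * (p₂ - c)) +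
        w₃ * ((p₃ - a) * (p₃ - b) * (p₃ - c)) + w₄ * ((p₄ - a) * (p₄ - b) * (p₄ - c)) =
      c₃ - (a + b + c) * c₂ + (a * b + a * c + b * c) * c₁ - a * b * c * c₀ := by
  rw [← h₀, ← h₁, ← h₂, ← h₃]
  ring

theorem I_sub_ne_zero_and_I_sub_conj_ne_zero {z : ℂ} (hz : z ^ 2 ≠ -1) :
    I - z ≠ 0 ∧ I - conj z ≠ 0 := by
  constructor
  · intro h
    obtain rfl := (sub_eq_zero.mp h).symm
    exact hz I_sq
  · intro h
    have : z = -I := by simpa using congrArg conj (sub_eq_zero.mp h).symm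
    rw [this, neg_sq, I_sq] at hz
    exact hz rfl

/-- From the four normalization relations of the g₂-function one obtains the
explicit formulas for C = 1/R₂(i) and A = 1/R₂(λ₁). -/
theorem g2_normalization_formulas (lam1 : ℂ) (him : lam1.im ≠ 0)
    (hsq : lam1 ^ 2 ≠ -1)
    (n : ℕ) (hn : 0 < n) (r : ℝ) (hr : r = 1 ∨ r = -1)
    (s₁ s₂ χ τ : ℝ) (A B C D : ℂ)
    (h1 : A - B + ((r : ℂ) / (2 * (n : ℂ))) * C - ((r : ℂ) / (2 * (n : ℂ))) * D = 0)
    (h2 : Complex.I * lam1 * A - Complex.I * (starRingEnd ℂ lam1) * B -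
        ((r : ℂ) / (2 * (n : ℂ))) * C - ((r : ℂ) / (2 * (n : ℂ))) * D - 4 * (τ : ℂ) = 0)
    (h3 : Complex.I * lam1 ^ 2 * A - Complex.I * (starRingEnd ℂ lam1) ^ 2 * B -
        (Complex.I * (r : ℂ) / (2 * (n : ℂ))) * C +
        (Complex.I * (r : ℂ) / (2 * (n : ℂ))) * D - 2 * (χ : ℂ) - 2 * (τ : ℂ) * (s₁ : ℂ) = 0)
    (h4 : Complex.I * lam1 ^ 3 * A - Complex.I * (starRingEnd ℂ lam1) ^ 3 * B +
        ((r : ℂ) / (2 * (n : ℂ))) * C + ((r : ℂ) / (2 * (n : ℂ))) * D +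
        (1 / 2 : ℂ) * (4 * (s₂ : ℂ) - 3 * (s₁ : ℂ) ^ 2) * (τ : ℂ) -
        (s₁ : ℂ) * (χ : ℂ) = 0) :
    C = -((n : ℂ) * (r : ℂ)) *
        ((8 * ((‖lam1‖ : ℝ) : ℂ) ^ 2 - 8 * (lam1.re : ℂ) * (s₁ : ℂ) +
              3 * (s₁ : ℂ) ^ 2 - 4 * (s₂ : ℂ) - 16 * (lam1.re : ℂ) * Complex.I +
              4 * Complex.I * (s₁ : ℂ)) * (τ : ℂ) +
          (2 * (s₁ : ℂ) - 8 * (lam1.re : ℂ) + 4 * Complex.I) * (χ : ℂ)) /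
        (2 * (Complex.I - lam1) * (Complex.I - starRingEnd ℂ lam1)) ∧
    A = ((4 * (s₂ : ℂ) - 3 * (s₁ : ℂ) ^ 2 + 4 * (s₁ : ℂ) * (starRingEnd ℂ lam1) - 8) *
            (τ : ℂ) +
          (4 * (starRingEnd ℂ lam1) - 2 * (s₁ : ℂ)) * (χ : ℂ)) /
        (4 * (1 + lam1 ^ 2) * (lam1.im : ℂ)) := by
  have hk : (r : ℂ) / (2 * n) * (2 * n * r) = 1 := by
    have : (n : ℂ) ≠ 0 := by exact_mod_cast hn.ne'
    rcases hr with rfl | rfl <;> field_simp <;> norm_num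
  set k : ℂ := r / (2 * n)
  have m₀ : I * A + -I * B + I * k * C + -I * k * D = 0 := by linear_combination I * h1
  have m₁ : I * A * lam1 + -I * B * conj lam1 + I * k * C * I + -I * k * D * -I = 4 * τ := by
    linear_combination h2 + k * (C + D) * I_sq
  have m₂ : I * A * lam1 ^ 2 + -I * B * conj lam1 ^ 2 + I * k * C * I ^ 2 + -I * k * D * (-I) ^ 2
      = 2 * χ + 2 * τ * s₁ := by
    linear_combination h3 + I * k * (C - D) * I_sq
  have m₃ : I * A * lam1 ^ 3 + -I * B * conj lam1 ^ 3 + I * k * C * I ^ 3 + -I * k * D * (-I) ^ 3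
      = s₁ * χ - (1 / 2) * (4 * s₂ - 3 * s₁ ^ 2) * τ := by
    linear_combination h4 + k * (C + D) * (I ^ 2 - 1) * I_sq
  have hA := sum_mul_cubic_eq_of_moments m₀ m₁ m₂ m₃ (conj lam1) I (-I)
  have hC := sum_mul_cubic_eq_of_moments m₀ m₁ m₂ m₃ lam1 (conj lam1) (-I)
  obtain ⟨hIl, hIm⟩ := I_sub_ne_zero_and_I_sub_conj_ne_zero hsq
  have hone_add_sq : 1 + lam1 ^ 2 ≠ 0 := fun h => hsq (by linear_combination h)
  constructor
  · rw [eq_div_iff (by simp [hIl, hIm]), re_eq_add_conj, ← mul_conj']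
    linear_combination (norm := (ring_nf; simp only [I_sq, I_pow_three, I_pow_four]; ring_nf))
      (-2 * n * r) * hC - 2 * C * (I - lam1) * (I - conj lam1) * hk
  · rw [eq_div_iff (by simp [hone_add_sq, him])]
    rw [sub_conj] at hA
    push_cast at hA
    linear_combination (norm := (ring_nf; simp only [I_sq, I_pow_four]; ring_nf))
      (-2) * hA
end

section
/- Let λ₁ ∈ ℂ with Im(λ₁) ≠ 0 and λ₁ ∉ {i, −i}, let n be a positive integer, r ∈ {1,−1}, and let s₁, s₂, χ, τ ∈ ℝ. Suppose A, B, C, D ∈ ℂ satisfy the four relations: (i) A − B + (r/(2n))C − (r/(2n))D = 0; (ii) iλ₁A − iλ₁*B − (r/(2n))C − (r/(2n))D − 4τ = 0; (iii) iλ₁²A − i(λ₁*)²B − (ir/(2n))C + (ir/(2n))D − 2χ − 2τs₁ = 0; (iv) iλ₁³A − i(λ₁*)³B + (r/(2n))C + (r/(2n))D + (1/2)(4s₂ − 3s₁²)τ − s₁χ = 0. Then for every λ ∈ ℂ with λ ∉ {λ₁, λ₁*, i, −i}: −(i/2)·A/(λ₁−λ) + (i/2)·B/(λ₁*−λ) −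 (ir/(4n))·C/(i−λ) + (ir/(4n))·D/(−i−λ) = [8τλ² + (4χ + 4s₁τ − 16Re(λ₁)τ)λ + 8|λ₁|²τ − 8Re(λ₁)s₁τ + 3s₁²τ − 4s₂τ + 8τ − 8Re(λ₁)χ + 2s₁χ] / (4(λ−λ₁)(λ−λ₁*)(λ²+1)). -/
/-!
The left side is a sum of four simple fractions `cₖ / (λ - pₖ)` with poles `λ₁, λ̄₁, i, -i`.
Over the common denominator its numerator `∑ cₖ ∏_{j ≠ k} (λ - pⱼ)` is a cubic whose
coefficients are the moments `∑ cₖ pₖ ^ j` (`j ≤ 3`) corrected by the elementary symmetric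
functions of the poles. The four normalization relations say precisely that these moments are
`0, 2τ, χ + τ s₁` and `(s₁ χ - (2 s₂ - 3 s₁² / 2) τ) / 2`, so the cubic term drops out, and
`λ₁ + λ̄₁ = 2 Re λ₁`, `λ₁ λ̄₁ = ‖λ₁‖²`, `(λ - i)(λ + i) = λ² + 1` give the stated form.
-/

theorem sum_div_sub_four_eq_of_moments {K : Type*} [Field K]
    {x p₁ p₂ p₃ p₄ c₁ c₂ c₃ c₄ m₁ m₂ m₃ : K}
    (hx₁ : x ≠ p₁) (hx₂ : x ≠ p₂) (hx₃ : x ≠ p₃) (hx₄ : x ≠ p₄)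
    (h₀ : c₁ + c₂ + c₃ + c₄ = 0)
    (h₁ : c₁ * p₁ + c₂ * p₂ + c₃ * p₃ + c₄ * p₄ = m₁)
    (h₂ : c₁ * p₁ ^ 2 + c₂ * p₂ ^ 2 + c₃ * p₃ ^ 2 + c₄ * p₄ ^ 2 = m₂)
    (h₃ : c₁ * p₁ ^ 3 + c₂ * p₂ ^ 3 + c₃ * p₃ ^ 3 + c₄ * p₄ ^ 3 = m₃) :
    c₁ / (x - p₁) + c₂ / (x - p₂) + c₃ / (x - p₃) + c₄ / (x - p₄) =
      (m₁ * x ^ 2 + (m₂ - (p₁ + p₂ + p₃ + p₄) * m₁) * x +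
          (m₃ - (p₁ + p₂ + p₃ + p₄) * m₂ +
            (p₁ * p₂ + p₁ * p₃ + p₁ * p₄ + p₂ * p₃ + p₂ * p₄ + p₃ * p₄) * m₁)) /
        ((x - p₁) * (x - p₂) * (x - p₃) * (x - p₄)) := by
  subst h₁ h₂ h₃
  field_simp [sub_ne_zero.2 hx₁, sub_ne_zero.2 hx₂, sub_ne_zero.2 hx₃, sub_ne_zero.2 hx₄]
  linear_combination (x ^ 3 - (p₁ + p₂ + p₃ + p₄) * x ^ 2
    + (p₁ * p₂ + p₁ * p₃ + p₁ * p₄ + p₂ * p₃ + p₂ * p₄ + p₃ * p₄) * x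
    - (p₁ * p₂ * p₃ + p₁ * p₂ * p₄ + p₁ * p₃ * p₄ + p₂ * p₃ * p₄)) * h₀

theorem g2_partial_fraction_identity_general (lam1 : ℂ)
    (n : ℕ) (r : ℝ)
    (s₁ s₂ χ τ : ℝ) (A B C D : ℂ)
    (h1 : A - B + ((r : ℂ) / (2 * (n : ℂ))) * C - ((r : ℂ) / (2 * (n : ℂ))) * D = 0)
    (h2 : Complex.I * lam1 * A - Complex.I * (starRingEnd ℂ lam1) * B -
        ((r : ℂ) / (2 * (n : ℂ))) * C - ((r : ℂ) / (2 * (n : ℂ))) * D - 4 * (τ : ℂ) = 0)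
    (h3 : Complex.I * lam1 ^ 2 * A - Complex.I * (starRingEnd ℂ lam1) ^ 2 * B -
        (Complex.I * (r : ℂ) / (2 * (n : ℂ))) * C +
        (Complex.I * (r : ℂ) / (2 * (n : ℂ))) * D - 2 * (χ : ℂ) - 2 * (τ : ℂ) * (s₁ : ℂ) = 0)
    (h4 : Complex.I * lam1 ^ 3 * A - Complex.I * (starRingEnd ℂ lam1) ^ 3 * B +
        ((r : ℂ) / (2 * (n : ℂ))) * C + ((r : ℂ) / (2 * (n : ℂ))) * D +
        (1 / 2 : ℂ) * (4 * (s₂ : ℂ) - 3 * (s₁ : ℂ) ^ 2) * (τ : ℂ) -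
        (s₁ : ℂ) * (χ : ℂ) = 0) :
    ∀ lam : ℂ, lam ≠ lam1 → lam ≠ starRingEnd ℂ lam1 →
      lam ≠ Complex.I → lam ≠ -Complex.I →
      -(Complex.I / 2) * A / (lam1 - lam) +
          (Complex.I / 2) * B / (starRingEnd ℂ lam1 - lam) -
          (Complex.I * (r : ℂ) / (4 * (n : ℂ))) * C / (Complex.I - lam) +
          (Complex.I * (r : ℂ) / (4 * (n : ℂ))) * D / (-Complex.I - lam) =
        (8 * (τ : ℂ) * lam ^ 2 +
            (4 * (χ : ℂ) + 4 * (s₁ : ℂ) * (τ : ℂ) - 16 * (lam1.re : ℂ) * (τ : ℂ)) * lam +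
            8 * ((‖lam1‖ : ℝ) : ℂ) ^ 2 * (τ : ℂ) -
            8 * (lam1.re : ℂ) * (s₁ : ℂ) * (τ : ℂ) + 3 * (s₁ : ℂ) ^ 2 * (τ : ℂ) -
            4 * (s₂ : ℂ) * (τ : ℂ) + 8 * (τ : ℂ) - 8 * (lam1.re : ℂ) * (χ : ℂ) +
            2 * (s₁ : ℂ) * (χ : ℂ)) /
          (4 * (lam - lam1) * (lam - starRingEnd ℂ lam1) * (lam ^ 2 + 1)) := by
  intro lam hne₁ hne₂ hneI hneNegI
  rw [mul_div_assoc] at h3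
  set w := (r : ℂ) / (2 * n)
  have hw : Complex.I * r / (4 * n) = Complex.I / 2 * w := by
    rw [show (4 : ℂ) * n = 2 * (2 * n) by ring, div_mul_div_comm]
  have hI : Complex.I ^ 2 = -1 := Complex.I_sq
  have partial_fractions := sum_div_sub_four_eq_of_moments (x := lam)
    (c₁ := Complex.I / 2 * A) (c₂ := -(Complex.I / 2) * B)
    (c₃ := Complex.I / 2 * w * C) (c₄ := -(Complex.I / 2 * w) * D)
    (m₁ := 2 * τ) (m₂ := χ + τ * s₁) (m₃ := (s₁ * χ - (4 * s₂ - 3 * s₁ ^ 2) * τ / 2) / 2)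
    hne₁ hne₂ hneI hneNegI (by linear_combination Complex.I / 2 * h1)
    (by linear_combination (1 / 2 : ℂ) * h2 + w / 2 * (C + D) * hI)
    (by linear_combination (1 / 2 : ℂ) * h3 + Complex.I / 2 * w * (C - D) * hI)
    (by linear_combination (1 / 2 : ℂ) * h4 + (Complex.I ^ 2 - 1) / 2 * w * (C + D) * hI)
  have div_sub_swap : ∀ a p : ℂ, a / (p - lam) = -a / (lam - p) := fun a p => by
    rw [← neg_sub lam p, div_neg, neg_div]
  have hre : (lam1.re : ℂ) = (lam1 + starRingEnd ℂ lam1) / 2 := by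
    rw [Complex.add_conj]; push_cast; ring
  rw [hw, div_sub_swap, div_sub_swap (_ * B), div_sub_swap (_ * C), div_sub_swap (_ * D)]
  refine Eq.trans (by ring) (partial_fractions.trans ?_)
  rw [hre, ← Complex.mul_conj', ← mul_div_mul_left _ _ (by norm_num : (4 : ℂ) ≠ 0)]
  congr 1
  · linear_combination -8 * τ * hI
  · linear_combination -4 * (lam - lam1) * (lam - starRingEnd ℂ lam1) * hI

/-- Under the four normalization relations of the g₂-function, the partial-fraction
combination −(i/2)A/(λ₁−λ) + (i/2)B/(λ₁*−λ) − (ir/(4n))C/(i−λ) + (ir/(4n))D/(−i−λ)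
equals an explicit rational function with quadratic numerator. -/
theorem g2_partial_fraction_identity (lam1 : ℂ) (him : lam1.im ≠ 0)
    (hne1 : lam1 ≠ Complex.I) (hne2 : lam1 ≠ -Complex.I)
    (n : ℕ) (hn : 0 < n) (r : ℝ) (hr : r = 1 ∨ r = -1)
    (s₁ s₂ χ τ : ℝ) (A B C D : ℂ)
    (h1 : A - B + ((r : ℂ) / (2 * (n : ℂ))) * C - ((r : ℂ) / (2 * (n : ℂ))) * D = 0)
    (h2 : Complex.I * lam1 * A - Complex.I * (starRingEnd ℂ lam1) * B -
        ((r : ℂ) / (2 * (n : ℂ))) * C - ((r : ℂ) / (2 * (n : ℂ))) * D - 4 * (τ : ℂ) = 0)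
    (h3 : Complex.I * lam1 ^ 2 * A - Complex.I * (starRingEnd ℂ lam1) ^ 2 * B -
        (Complex.I * (r : ℂ) / (2 * (n : ℂ))) * C +
        (Complex.I * (r : ℂ) / (2 * (n : ℂ))) * D - 2 * (χ : ℂ) - 2 * (τ : ℂ) * (s₁ : ℂ) = 0)
    (h4 : Complex.I * lam1 ^ 3 * A - Complex.I * (starRingEnd ℂ lam1) ^ 3 * B +
        ((r : ℂ) / (2 * (n : ℂ))) * C + ((r : ℂ) / (2 * (n : ℂ))) * D +
        (1 / 2 : ℂ) * (4 * (s₂ : ℂ) - 3 * (s₁ : ℂ) ^ 2) * (τ : ℂ) -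
        (s₁ : ℂ) * (χ : ℂ) = 0) :
    ∀ lam : ℂ, lam ≠ lam1 → lam ≠ starRingEnd ℂ lam1 →
      lam ≠ Complex.I → lam ≠ -Complex.I →
      -(Complex.I / 2) * A / (lam1 - lam) +
          (Complex.I / 2) * B / (starRingEnd ℂ lam1 - lam) -
          (Complex.I * (r : ℂ) / (4 * (n : ℂ))) * C / (Complex.I - lam) +
          (Complex.I * (r : ℂ) / (4 * (n : ℂ))) * D / (-Complex.I - lam) =
        (8 * (τ : ℂ) * lam ^ 2 +
            (4 * (χ : ℂ) + 4 * (s₁ : ℂ) * (τ : ℂ) - 16 * (lam1.re : ℂ) * (τ : ℂ)) * lam +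
            8 * ((‖lam1‖ : ℝ) : ℂ) ^ 2 * (τ : ℂ) -
            8 * (lam1.re : ℂ) * (s₁ : ℂ) * (τ : ℂ) + 3 * (s₁ : ℂ) ^ 2 * (τ : ℂ) -
            4 * (s₂ : ℂ) * (τ : ℂ) + 8 * (τ : ℂ) - 8 * (lam1.re : ℂ) * (χ : ℂ) +
            2 * (s₁ : ℂ) * (χ : ℂ)) /
          (4 * (lam - lam1) * (lam - starRingEnd ℂ lam1) * (lam ^ 2 + 1)) :=
  g2_partial_fraction_identity_general lam1 n r s₁ s₂ χ τ A B C D h1 h2 h3 h4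
end

section
/- Let g ≥ 1 and let B be a symmetric g×g complex matrix such that the real quadratic form m ↦ Re(⟨m, Bm⟩) is negative definite on ℝ^g. Then for every u ∈ ℂ^g, the family m ↦ exp((1/2)⟨m, Bm⟩ + ⟨m, u⟩) indexed by m ∈ ℤ^g is absolutely summable; that is, the Riemann theta series Θ(u; B) = Σ_{m∈ℤ^g} exp((1/2)⟨m, Bm⟩ + ⟨m, u⟩) converges absolutely. -/
/-!
The real part of `⟨m, B m⟩` is a negative definite quadratic form in `m`, so by compactness of
the unit sphere it is at most `-ε ‖m‖²` for some `ε > 0`. This Gaussian decay beats the linear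
growth of `Re ⟨m, u⟩ + ∑ |mₖ|`, so the terms of the series are dominated by a constant multiple
of `∏ₖ exp (-|mₖ|)`, whose sum over `ℤ^g` is a product of convergent geometric-type series.
-/

open Complex Matrix

theorem exists_pos_mul_norm_sq_le {E : Type*} [NormedAddCommGroup E] [NormedSpace ℝ E]
    [FiniteDimensional ℝ E] {f : E → ℝ} (hf : Continuous f)
    (hhom : ∀ (c : ℝ) (v : E), f (c • v) = c ^ 2 * f v) (hpos : ∀ v ≠ 0, 0 < f v) :
    ∃ ε > 0, ∀ v, ε * ‖v‖ ^ 2 ≤ f v := by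
  have hf0 : f 0 = 0 := by simpa using hhom 0 0
  rcases subsingleton_or_nontrivial E with hE | hE
  · exact ⟨1, one_pos, fun v => by simp [Subsingleton.elim v 0, hf0]⟩
  obtain ⟨v₀, hv₀, hmin⟩ := (isCompact_sphere (0 : E) 1).exists_isMinOn
    (NormedSpace.sphere_nonempty.mpr zero_le_one) hf.continuousOn
  rw [mem_sphere_zero_iff_norm] at hv₀
  refine ⟨f v₀, hpos v₀ (norm_ne_zero_iff.mp (by simp [hv₀])), fun v => ?_⟩
  rcases eq_or_ne v 0 with rfl | hv
  · simp [hf0]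
  have hunit : ‖v‖⁻¹ • v ∈ Metric.sphere (0 : E) 1 := by simp [norm_smul, hv]
  calc f v₀ * ‖v‖ ^ 2 ≤ f (‖v‖⁻¹ • v) * ‖v‖ ^ 2 := by gcongr; exact hmin hunit
    _ = f v := by rw [hhom]; field_simp

theorem exists_re_dotProduct_mulVec_le_neg_mul_norm_sq {ι : Type*} [Fintype ι]
    (B : Matrix ι ι ℂ)
    (hneg : ∀ v : ι → ℝ, v ≠ 0 → ((ofReal ∘ v) ⬝ᵥ B *ᵥ (ofReal ∘ v)).re < 0) :
    ∃ ε > 0, ∀ v : ι → ℝ, ((ofReal ∘ v) ⬝ᵥ B *ᵥ (ofReal ∘ v)).re ≤ -(ε * ‖v‖ ^ 2) := by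
  have hcont : Continuous fun v : ι → ℝ => -((ofReal ∘ v) ⬝ᵥ B *ᵥ (ofReal ∘ v)).re := by
    fun_prop
  have hhom (c : ℝ) (v : ι → ℝ) : ofReal ∘ (c • v) = (c : ℂ) • (ofReal ∘ v) := by
    ext; simp
  obtain ⟨ε, hε, hle⟩ := exists_pos_mul_norm_sq_le hcont
    (fun c v => by simp [hhom, mulVec_smul, smul_dotProduct]; ring)
    (fun v hv => neg_pos.mpr (hneg v hv))
  exact ⟨ε, hε, fun v => le_neg.mpr (hle v)⟩

theorem re_dotProduct_le {ι : Type*} [Fintype ι] (u : ι → ℂ) (v : ι → ℝ) :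
    ((ofReal ∘ v) ⬝ᵥ u).re ≤ (∑ k, ‖u k‖) * ‖v‖ :=
  calc ((ofReal ∘ v) ⬝ᵥ u).re ≤ ‖(ofReal ∘ v) ⬝ᵥ u‖ := re_le_norm _
    _ ≤ ∑ k, ‖v k‖ * ‖u k‖ := by
        simpa [dotProduct] using norm_sum_le Finset.univ fun k => (v k : ℂ) * u k
    _ ≤ ∑ k, ‖v‖ * ‖u k‖ := by gcongr; exact norm_le_pi_norm v _
    _ = (∑ k, ‖u k‖) * ‖v‖ := by
        rw [Finset.sum_mul]; exact Finset.sum_congr rfl fun k _ => mul_comm _ _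

theorem summable_prod_pi_of_nonneg {ι : Type*} [Fintype ι] {κ : ι → Type*}
    {f : ∀ i, κ i → ℝ} (hf : ∀ i, Summable (f i)) (hf0 : ∀ i x, 0 ≤ f i x) :
    Summable fun x : ∀ i, κ i => ∏ i, f i (x i) := by
  refine summable_of_sum_le (c := ∏ i, ∑' y, f i y)
    (fun x => Finset.prod_nonneg fun i _ => hf0 i _) fun s => ?_
  classical
  calc ∑ x ∈ s, ∏ i, f i (x i)
      ≤ ∑ x ∈ Fintype.piFinset fun i => s.image (· i), ∏ i, f i (x i) :=
        Finset.sum_le_sum_of_subset_of_nonneg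
          (fun x hx => Fintype.mem_piFinset.mpr fun i => Finset.mem_image_of_mem _ hx)
          fun x _ _ => Finset.prod_nonneg fun i _ => hf0 i _
    _ = ∏ i, ∑ y ∈ s.image (· i), f i y := (Finset.prod_univ_sum _ _).symm
    _ ≤ ∏ i, ∑' y, f i y := Finset.prod_le_prod (fun i _ => Finset.sum_nonneg fun y _ => hf0 i y)
        fun i _ => (hf i).sum_le_tsum _ fun y _ => hf0 i y

theorem Real.summable_exp_neg_abs_int : Summable fun n : ℤ => Real.exp (-|(n : ℝ)|) :=
  .of_nat_of_neg (by simpa using Real.summable_exp_neg_nat)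
    (by simpa using Real.summable_exp_neg_nat)

theorem norm_exp_half_quad_add_lin_le {ι : Type*} [Fintype ι] (B : Matrix ι ι ℂ) (u : ι → ℂ)
    {ε : ℝ} (hε : 0 < ε)
    (hquad : ∀ v : ι → ℝ, ((ofReal ∘ v) ⬝ᵥ B *ᵥ (ofReal ∘ v)).re ≤ -(ε * ‖v‖ ^ 2))
    (m : ι → ℤ) :
    ‖exp ((1 / 2 : ℂ) * ((fun k => (m k : ℂ)) ⬝ᵥ B *ᵥ fun k => (m k : ℂ)) +
        (fun k => (m k : ℂ)) ⬝ᵥ u)‖ ≤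
      Real.exp ((∑ k, ‖u k‖ + Fintype.card ι) ^ 2 / (2 * ε)) *
        ∏ k, Real.exp (-|(m k : ℝ)|) := by
  set v : ι → ℝ := fun k => m k
  have hcast : (fun k => (m k : ℂ)) = ofReal ∘ v := by ext; simp [v]
  have hl1 : ∑ k, |v k| ≤ Fintype.card ι * ‖v‖ := by
    simpa using Pi.sum_norm_apply_le_norm v
  set t := ‖v‖
  set S := ∑ k, ‖u k‖ + (Fintype.card ι : ℝ)
  have hpeak : -(ε / 2 * t ^ 2) + S * t ≤ S ^ 2 / (2 * ε) := by
    rw [le_div_iff₀ (by positivity)]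
    nlinarith [sq_nonneg (ε * t - S)]
  rw [norm_exp, hcast, ← Real.exp_sum, ← Real.exp_add, Real.exp_le_exp]
  have hre : ((1 / 2 : ℂ) * ((ofReal ∘ v) ⬝ᵥ B *ᵥ (ofReal ∘ v)) + (ofReal ∘ v) ⬝ᵥ u).re =
      ((ofReal ∘ v) ⬝ᵥ B *ᵥ (ofReal ∘ v)).re / 2 + ((ofReal ∘ v) ⬝ᵥ u).re := by
    simp [div_eq_inv_mul]
  rw [hre, Finset.sum_neg_distrib]
  linarith [hquad v, re_dotProduct_le u v]

theorem theta_series_converges_general (g : ℕ)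
    (B : Matrix (Fin g) (Fin g) ℂ)
    (hneg : ∀ m : Fin g → ℝ, m ≠ 0 →
      (dotProduct (fun k => (m k : ℂ)) (B.mulVec fun k => (m k : ℂ))).re < 0) :
    ∀ u : Fin g → ℂ,
      Summable (fun m : Fin g → ℤ =>
        ‖Complex.exp ((1 / 2 : ℂ) *
            dotProduct (fun k => ((m k : ℤ) : ℂ)) (B.mulVec fun k => ((m k : ℤ) : ℂ)) +
          dotProduct (fun k => ((m k : ℤ) : ℂ)) u)‖) := by
  intro u
  obtain ⟨ε, hε, hquad⟩ := exists_re_dotProduct_mulVec_le_neg_mul_norm_sq B hneg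
  refine .of_nonneg_of_le (fun _ => norm_nonneg _)
    (norm_exp_half_quad_add_lin_le B u hε hquad) ?_
  exact (summable_prod_pi_of_nonneg (fun _ => Real.summable_exp_neg_abs_int)
    fun _ _ => (Real.exp_pos _).le).mul_left _

/-- If B is a symmetric g×g complex matrix such that m ↦ Re(⟨m, Bm⟩) is negative
definite on ℝ^g, then for every u ∈ ℂ^g the Riemann theta series
Σ_{m∈ℤ^g} exp((1/2)⟨m, Bm⟩ + ⟨m, u⟩) converges absolutely. -/
theorem theta_series_converges (g : ℕ) (hg : 1 ≤ g)
    (B : Matrix (Fin g) (Fin g) ℂ) (hsym : B.transpose = B)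
    (hneg : ∀ m : Fin g → ℝ, m ≠ 0 →
      (dotProduct (fun k => (m k : ℂ)) (B.mulVec fun k => (m k : ℂ))).re < 0) :
    ∀ u : Fin g → ℂ,
      Summable (fun m : Fin g → ℤ =>
        ‖Complex.exp ((1 / 2 : ℂ) *
            dotProduct (fun k => ((m k : ℤ) : ℂ)) (B.mulVec fun k => ((m k : ℤ) : ℂ)) +
          dotProduct (fun k => ((m k : ℤ) : ℂ)) u)‖) :=
  theta_series_converges_general g B hneg
end
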